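/- Let M be a Turing machine and K a natural number such that (1) for every input s with |s| ≥ K, the running time of M on s is strictly less than |s|, and (2) M(s) = 1 for all inputs s with |s| ≤ K. Then M(s) = 1 for all inputs s. -/

import Mathlib

/-- Tape alphabet: 0, 1, blank, left-end marker. -/
inductive TSym : Type
  | zero | one | blank | mark
deriving DecidableEq

inductive Move : Type
  | L | S | R
deriving DecidableEq

/-- A deterministic single-tape Turing machine. -/
structure TM where
  Q : Type
  q0 : Q
  qh : Q
  δ : Q → TSym → Q × TSym × Move

structure Cfg (M : TM) where
  q : M.Q
  pos : ℕ
  tape : ℕ → TSym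

def TM.step (M : TM) (c : Cfg M) : Cfg M :=
  let r := M.δ c.q (c.tape c.pos)
  { q := r.1
    pos := match r.2.2 with
      | .L => c.pos - 1
      | .S => c.pos
      | .R => c.pos + 1
    tape := Function.update c.tape c.pos r.2.1 }

/-- Initial tape: left-end marker at square 0, input written from square 1 on. -/
def initTape (s : List Bool) : ℕ → TSym := fun n =>
  if n = 0 then TSym.mark
  else if n - 1 < s.length then (if s.getD (n - 1) false then TSym.one else TSym.zero)
  else TSym.blank

def TM.init (M : TM) (s : List Bool) : Cfg M := ⟨M.q0, 0, initTape s⟩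

def TM.cfgAt (M : TM) (s : List Bool) (n : ℕ) : Cfg M := M.step^[n] (M.init s)

def TM.HaltsIn (M : TM) (s : List Bool) (n : ℕ) : Prop := (M.cfgAt s n).q = M.qh

def TM.Halts (M : TM) (s : List Bool) : Prop := ∃ n, M.HaltsIn s n

/-- Running time: the least number of steps after which the machine is halted. -/
noncomputable def TM.time (M : TM) (s : List Bool) : ℕ := sInf {n | M.HaltsIn s n}

/-- Output: the symbol at tape square 1 upon halting. -/
noncomputable def TM.output (M : TM) (s : List Bool) : TSym :=
  (M.cfgAt s (M.time s)).tape 1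

/-- Formulas are ASCII strings. -/
abbrev Formula := List (Fin 128)
abbrev FSeq := List Formula

/-- The length of a formula sequence: the sum of lengths of its members. -/
def seqLen (π : FSeq) : ℕ := (π.map List.length).sum

/-- Justification kinds for a proof step: logical axiom, ZFC axiom, member of the
theory, modus ponens (with recorded premise indices), generalization. -/
inductive Just : Type
  | logic | zfc | axm
  | mp (j k : ℕ)
  | gen (j k : ℕ)
deriving DecidableEq

/-- Abstract data of the ambient proof calculus. -/
structure ProofSystem where
  logicAx : Formula → Bool
  zfcAx : Formula → Bool
  isMP : Formula → Formula → Formula → Bool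
  isGen : ℕ → Formula → Formula → Bool

/-- The checker for a single justified step. -/
def justOK (P : ProofSystem) (T : FSeq) (σ : FSeq) (i : ℕ) : Just → Bool
  | .logic => P.logicAx (σ.getD i [])
  | .zfc => P.zfcAx (σ.getD i [])
  | .axm => decide ((σ.getD i []) ∈ T)
  | .mp j k => decide (j < i) && decide (k < i) &&
      P.isMP (σ.getD j []) (σ.getD k []) (σ.getD i [])
  | .gen j k => decide (j < i) && P.isGen k (σ.getD j []) (σ.getD i [])

/-- The adjoint checker of a proof type `G`: accepts `(T, σ)` iff `σ` has the same
length as `G` and each step of `σ` is justified as recorded in `G`. -/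
def CK (P : ProofSystem) (G : List Just) (T σ : FSeq) : Bool :=
  decide (σ.length = G.length) &&
    (List.range G.length).all (fun i => justOK P T σ i (G.getD i Just.logic))

/-- `π` is a derivation of `φ` from the theory `T`. -/
def ProofOf (P : ProofSystem) (T : FSeq) (π : FSeq) (φ : Formula) : Prop :=
  π.getLast? = some φ ∧ ∃ G : List Just, G.length = π.length ∧ CK P G T π = true

/-- Cost of the membership check `φ ∈ T` by linear scan (algorithm AL). -/
def axmCost (T : FSeq) (φ : Formula) : ℕ := T.idxOf φ + 1

def justCost (T : FSeq) (σ : FSeq) (i : ℕ) : Just → ℕ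
  | .axm => axmCost T (σ.getD i [])
  | _ => 1

/-- Running time of the adjoint checker `CK_G` on `(T, σ)`. -/
def ckCost (T σ : FSeq) (G : List Just) : ℕ :=
  ((List.range G.length).map (fun i => justCost T σ i (G.getD i Just.logic))).sum

/-- The data needed to speak about normal proofs of `M(s) = v`:
machine description axioms `defM`, input description axioms `inputAx s`,
and the halting formula `∃ i, t_{i,1} = (v, q_halt, 1)`. -/
structure NormalSetup where
  M : TM
  P : ProofSystem
  defM : FSeq
  inputAx : List Bool → FSeq
  haltFormula : TSym → Formula

/-- The theory `T_{M,s} = def_M ++ input_s`. -/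
def NormalSetup.T (S : NormalSetup) (s : List Bool) : FSeq := S.defM ++ S.inputAx s

/-- `π` is a normal proof of `M(s) = v`. -/
def NormalSetup.NormalProof (S : NormalSetup) (s : List Bool) (v : TSym) (π : FSeq) : Prop :=
  ProofOf S.P (S.T s) π (S.haltFormula v)

/-- `FS(M, s, v)`: the minimal length of a normal proof of `M(s) = v`. -/
noncomputable def NormalSetup.FS (S : NormalSetup) (s : List Bool) (v : TSym) : ℕ :=
  sInf {k | ∃ π, S.NormalProof s v π ∧ seqLen π = k}

/-- The `C`-generated verifier: accepts `s` iff some adjoint checker in `C` accepts. -/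
def FC (S : NormalSetup) (C : List (List Just × FSeq)) (s : List Bool) : Bool :=
  C.any (fun p => CK S.P p.1 (S.T s) p.2)


/-- Key agreement lemma: if two configurations agree in state, position, and on all
tape cells below `N`, and the run length keeps the head below `N`, then the runs agree. -/
lemma agree_lemma (M : TM) (N : ℕ) :
    ∀ k (c c' : Cfg M), c.q = c'.q → c.pos = c'.pos →
      (∀ n < N, c.tape n = c'.tape n) → c.pos + k ≤ N →
      (M.step^[k] c).q = (M.step^[k] c').q ∧
      (M.step^[k] c).pos = (M.step^[k] c').pos ∧
      ∀ n < N, (M.step^[k] c).tape n = (M.step^[k] c').tape n := by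
  intro k
  induction k with
  | zero => intro c c' hq hp ht _; exact ⟨hq, hp, ht⟩
  | succ k ih =>
    intro c c' hq hp ht hb
    have hposN : c.pos < N := by omega
    have hread : c.tape c.pos = c'.tape c'.pos := by rw [← hp]; exact ht c.pos hposN
    have hδ : M.δ c.q (c.tape c.pos) = M.δ c'.q (c'.tape c'.pos) := by rw [hq, hread]
    rw [Function.iterate_succ_apply, Function.iterate_succ_apply]
    have hq' : (M.step c).q = (M.step c').q := by simp [TM.step, hδ]
    have hp' : (M.step c).pos = (M.step c').pos := by
      simp only [TM.step]; rw [hq, hread, hp]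
    have ht' : ∀ n < N, (M.step c).tape n = (M.step c').tape n := by
      intro n hn
      simp only [TM.step, Function.update]
      rw [hδ, hp]
      by_cases h : n = c'.pos
      · simp [h]
      · simp [h]; exact ht n hn
    have hb' : (M.step c).pos + k ≤ N := by
      have : (M.step c).pos ≤ c.pos + 1 := by
        simp only [TM.step]
        rcases (M.δ c.q (c.tape c.pos)).2.2 <;> simp <;> omega
      omega
    exact ih (M.step c) (M.step c') hq' hp' ht' hb'

lemma initTape_agree (s : List Bool) (hs : 1 ≤ s.length) :
    ∀ n < s.length, initTape s n = initTape (s.take (s.length - 1)) n := by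
  intro n hn
  unfold initTape
  by_cases h0 : n = 0
  · simp [h0]
  · have hn1 : n - 1 < s.length - 1 := by omega
    have hlen : (s.take (s.length - 1)).length = s.length - 1 := by
      simp [List.length_take]
    rw [if_neg h0, if_neg h0, if_pos (by omega), if_pos (by omega : n - 1 < (s.take (s.length - 1)).length)]
    have hg : (s.take (s.length - 1)).getD (n-1) false = s.getD (n-1) false := by
      rw [List.getD_eq_getElem _ _ (by omega : n - 1 < (s.take (s.length - 1)).length),
          List.getD_eq_getElem _ _ (by omega : n - 1 < s.length)]
      simp [List.getElem_take]
    rw [hg]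

/-- if `M` runs in time less than the input length on all inputs of
length ≥ K, and outputs 1 on all inputs of length ≤ K, then it outputs 1 on all inputs. -/
theorem stmt1 (M : TM) (K : ℕ)
    (hhalt : ∀ s : List Bool, M.Halts s)
    (h1 : ∀ s : List Bool, K ≤ s.length → M.time s < s.length)
    (h2 : ∀ s : List Bool, s.length ≤ K → M.output s = TSym.one) :
    ∀ s : List Bool, M.output s = TSym.one := by
  -- main proof
  suffices H : ∀ n (s : List Bool), s.length = n → M.output s = TSym.one by
    exact fun s => H s.length s rfl
  intro n
  induction n using Nat.strong_induction_on with
  | _ n ih =>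
  intro s hs
  by_cases hK : s.length ≤ K
  · exact h2 s hK
  push_neg at hK
  have hlen1 : 1 ≤ s.length := by omega
  by_cases hlen2 : 2 ≤ s.length
  · -- main case
    set s' := s.take (s.length - 1) with hs'
    have hlen' : s'.length = s.length - 1 := by simp [hs', List.length_take]
    set t := M.time s with htdef
    have ht : t < s.length := h1 s (by omega)
    have hne : {m | M.HaltsIn s m}.Nonempty := hhalt s
    have hhalts : M.HaltsIn s t := Nat.sInf_mem hne
    have htape := initTape_agree s hlen1
    have key : ∀ k ≤ s.length,
        (M.step^[k] (M.init s)).q = (M.step^[k] (M.init s')).q ∧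
        (M.step^[k] (M.init s)).pos = (M.step^[k] (M.init s')).pos ∧
        ∀ m < s.length, (M.step^[k] (M.init s)).tape m = (M.step^[k] (M.init s')).tape m := by
      intro k hk
      exact agree_lemma M s.length k (M.init s) (M.init s') rfl rfl htape (by simpa [TM.init] using hk)
    have hhalts' : M.HaltsIn s' t := by
      have := (key t (by omega)).1
      unfold TM.HaltsIn TM.cfgAt at *
      rw [← this]; exact hhalts
    have hne' : {m | M.HaltsIn s' m}.Nonempty := hhalt s'
    have ht'le : M.time s' ≤ t := Nat.sInf_le hhalts'
    have hhalts2 : M.HaltsIn s (M.time s') := by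
      have := (key (M.time s') (by omega)).1
      have h3 : M.HaltsIn s' (M.time s') := Nat.sInf_mem hne'
      unfold TM.HaltsIn TM.cfgAt at *
      rw [this]; exact h3
    have hteq : M.time s' = t := le_antisymm ht'le (Nat.sInf_le hhalts2)
    have hout : M.output s = M.output s' := by
      unfold TM.output TM.cfgAt
      rw [hteq, ← htdef]
      exact (key t (by omega)).2.2 1 (by omega)
    rw [hout]
    by_cases hK' : s'.length ≤ K
    · exact h2 s' hK'
    · exact ih s'.length (by omega) s' rfl
  · -- s.length = 1, so K = 0; derive contradiction from output [] 
    have hl1 : s.length = 1 := by omega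
    have hK0 : K = 0 := by omega
    have ht : M.time s < 1 := by have := h1 s (by omega); omega
    have ht0 : M.time s = 0 := by omega
    have hhalts : M.HaltsIn s (M.time s) := Nat.sInf_mem (hhalt s)
    rw [ht0] at hhalts
    have hq0 : M.q0 = M.qh := by
      unfold TM.HaltsIn TM.cfgAt at hhalts
      simpa [TM.init] using hhalts
    have hnilhalt : M.HaltsIn [] 0 := by
      unfold TM.HaltsIn TM.cfgAt
      simpa [TM.init] using hq0
    have hnil0 : M.time [] = 0 := Nat.le_zero.mp (Nat.sInf_le hnilhalt)
    have : M.output [] = TSym.blank := by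
      unfold TM.output TM.cfgAt
      rw [hnil0]
      simp [TM.init, initTape]
    have h2nil := h2 [] (by simp)
    rw [this] at h2nil
    exact absurd h2nil (by simp)
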